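/- arXiv:1902.04853 — 9 statements merged into one kernel-verified Lean document; each statement's English description precedes it below -/
import Mathlib

section
/- Let ν, d > 0 and let S, D be symmetric real 3×3 matrices. Then the following two conditions are equivalent: (i) if D ≠ O then S = 2νd·D/|D|, and if D = O then |S| ≤ 2νd; (ii) (|S| − 2νd)⁺ + | 2νd·D − |D|·S | = 0. -/
/-- Frobenius norm of a real 3×3 matrix: `|A|² = tr(A²)` for symmetric `A`. -/
noncomputable def frobNorm (A : Matrix (Fin 3) (Fin 3) ℝ) : ℝ :=
  Real.sqrt (∑ i, ∑ j, (A i j) ^ 2)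

lemma frobNorm_nonneg (A : Matrix (Fin 3) (Fin 3) ℝ) : 0 ≤ frobNorm A :=
  Real.sqrt_nonneg _

lemma frobNorm_eq_zero_iff (A : Matrix (Fin 3) (Fin 3) ℝ) : frobNorm A = 0 ↔ A = 0 := by
  unfold frobNorm
  rw [Real.sqrt_eq_zero (by positivity)]
  constructor
  · intro h
    ext i j
    have h1 := (Finset.sum_eq_zero_iff_of_nonneg (fun i _ => by positivity)).mp h i (by simp)
    have h2 := (Finset.sum_eq_zero_iff_of_nonneg (fun j _ => by positivity)).mp h1 j (by simp)
    simpa using pow_eq_zero_iff (n := 2) (by norm_num) |>.mp h2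
  · intro h; simp [h]

lemma frobNorm_smul (c : ℝ) (A : Matrix (Fin 3) (Fin 3) ℝ) :
    frobNorm (c • A) = |c| * frobNorm A := by
  unfold frobNorm
  rw [← Real.sqrt_sq_eq_abs, ← Real.sqrt_mul (by positivity), Finset.mul_sum]
  congr 1
  simp [Finset.mul_sum, mul_pow]

/-- Rigid/free-flow like response as a single scalar implicit constitutive equation. -/
theorem statement2 (ν d : ℝ) (hν : 0 < ν) (hd : 0 < d)
    (S D : Matrix (Fin 3) (Fin 3) ℝ) (hSsym : S.IsSymm) (hDsym : D.IsSymm) :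
    ((D ≠ 0 → S = (2 * ν * d / frobNorm D) • D) ∧ (D = 0 → frobNorm S ≤ 2 * ν * d)) ↔
      max (frobNorm S - 2 * ν * d) 0 + frobNorm ((2 * ν * d) • D - frobNorm D • S) = 0 := by
  have hc : 0 < 2 * ν * d := by positivity
  have key : max (frobNorm S - 2 * ν * d) 0 + frobNorm ((2 * ν * d) • D - frobNorm D • S) = 0
      ↔ frobNorm S ≤ 2 * ν * d ∧ (2 * ν * d) • D = frobNorm D • S := by
    rw [add_eq_zero_iff_of_nonneg (le_max_right _ _) (frobNorm_nonneg _)]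
    rw [max_eq_right_iff, sub_nonpos, frobNorm_eq_zero_iff, sub_eq_zero]
  rw [key]
  constructor
  · rintro ⟨h1, h2⟩
    by_cases hD : D = 0
    · subst hD
      refine ⟨h2 rfl, ?_⟩
      simp [(frobNorm_eq_zero_iff 0).mpr rfl]
    · have hS := h1 hD
      have hDpos : 0 < frobNorm D := by
        rcases lt_or_eq_of_le (frobNorm_nonneg D) with h | h
        · exact h
        · exact absurd ((frobNorm_eq_zero_iff D).mp h.symm) hD
      have hnS : frobNorm S = 2 * ν * d := by
        rw [hS, frobNorm_smul, abs_of_pos (by positivity), div_mul_cancel₀ _ hDpos.ne']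
      refine ⟨hnS.le, ?_⟩
      rw [hS, smul_smul, mul_div_cancel₀ _ hDpos.ne']
  · rintro ⟨h1, h2⟩
    constructor
    · intro hD
      have hDpos : 0 < frobNorm D := by
        rcases lt_or_eq_of_le (frobNorm_nonneg D) with h | h
        · exact h
        · exact absurd ((frobNorm_eq_zero_iff D).mp h.symm) hD
      have : (frobNorm D)⁻¹ • ((2 * ν * d) • D) = (frobNorm D)⁻¹ • (frobNorm D • S) := by
        rw [h2]
      rw [smul_smul, smul_smul, inv_mul_cancel₀ hDpos.ne', one_smul] at this
      rw [← this]
      congr 1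
      field_simp
    · intro _; exact h1
end

section
/- Let σ > 0 and let ν_g : [0,∞) → (0,∞) be a (strictly positive) function. For symmetric real 3×3 matrices S and D, the following two conditions are equivalent: (i) |S| ≤ σ if and only if D = O, and whenever |S| > σ one has S = σ·D/|D| + 2ν_g(|D|²)D; (ii) 2ν_g(|D|²) D = ((|S| − σ)⁺/|S|) S, where the right-hand side is interpreted as O when S = O. -/
/-!
Both (i) and (ii) make `D` a nonnegative multiple of `S`, so everything reduces to lengths: on the
active set `|S| > σ` either condition amounts to `|S| = σ + 2ν|D|`. Only the norm and scalar
multiplication enter, so the argument runs in any real normed space, with `2ν_g(|D|²)` replaced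
by a positive constant `μ`.
-/

section YieldStress

variable {E : Type*} [NormedAddCommGroup E] [NormedSpace ℝ E] {σ μ : ℝ} {S D : E}

theorem active_flow_rule_iff (hσ : 0 < σ) (hμ : 0 < μ) (hS : σ < ‖S‖) :
    (D ≠ 0 ∧ S = (σ / ‖D‖) • D + μ • D) ↔ μ • D = ((‖S‖ - σ) / ‖S‖) • S := by
  have hn : 0 < ‖S‖ := hσ.trans hS
  constructor
  · rintro ⟨hD, hSD⟩
    rw [← add_smul] at hSD
    have hd : 0 < ‖D‖ := norm_pos_iff.mpr hD
    have hnorm : ‖S‖ = σ + μ * ‖D‖ := by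
      rw [hSD, norm_smul, Real.norm_of_nonneg (by positivity)]
      field_simp
    rw [hnorm, hSD, smul_smul]
    congr 1
    field_simp
    ring
  · intro h
    have hgap : 0 < ‖S‖ - σ := sub_pos.mpr hS
    have hk : 0 < (‖S‖ - σ) / ‖S‖ := div_pos hgap hn
    have hSD : S = (((‖S‖ - σ) / ‖S‖)⁻¹ * μ) • D := by
      rw [← smul_smul, eq_inv_smul_iff₀ hk.ne', h]
    have hD : D ≠ 0 := by
      rintro rfl
      exact hn.ne' (by rw [hSD, smul_zero, norm_zero])
    have hnorm : ‖S‖ - σ = μ * ‖D‖ := by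
      have := congrArg norm hSD
      rw [norm_smul, Real.norm_of_nonneg (mul_pos (inv_pos.mpr hk) hμ).le] at this
      field_simp at this
      linarith
    refine ⟨hD, ?_⟩
    rw [← add_smul]
    conv_lhs => rw [hSD]
    congr 1
    have hd : 0 < ‖D‖ := norm_pos_iff.mpr hD
    rw [hnorm]
    field_simp
    linarith

theorem yield_dichotomy_iff (hσ : 0 < σ) (hμ : 0 < μ) :
    ((‖S‖ ≤ σ ↔ D = 0) ∧ (σ < ‖S‖ → S = (σ / ‖D‖) • D + μ • D)) ↔
      μ • D = (max (‖S‖ - σ) 0 / ‖S‖) • S := by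
  rcases le_or_gt ‖S‖ σ with hrigid | hactive
  · rw [max_eq_right (by linarith), zero_div, zero_smul, smul_eq_zero]
    simp [hrigid, hμ.ne', hrigid.not_gt]
  · rw [max_eq_left (by linarith), ← active_flow_rule_iff hσ hμ hactive]
    simp [hactive.not_ge, hactive]

end YieldStress

section Frobenius

attribute [local instance] Matrix.frobeniusNormedAddCommGroup Matrix.frobeniusNormedSpace

theorem frobNorm_eq_norm (A : Matrix (Fin 3) (Fin 3) ℝ) : frobNorm A = ‖A‖ := by
  rw [Matrix.frobenius_norm_def, frobNorm, Real.sqrt_eq_rpow]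
  simp only [Real.norm_eq_abs, Real.rpow_two, sq_abs]

-- For `S = 0` the factor in (ii) is `max (-σ) 0 / 0 = 0`, matching the convention that the
-- right-hand side is then `O`.
theorem statement6_general (σ : ℝ) (hσ : 0 < σ) (νg : ℝ → ℝ) (hνg : ∀ t, 0 ≤ t → 0 < νg t)
    (S D : Matrix (Fin 3) (Fin 3) ℝ) :
    ((frobNorm S ≤ σ ↔ D = 0) ∧
      (σ < frobNorm S → S = (σ / frobNorm D) • D + (2 * νg (frobNorm D ^ 2)) • D)) ↔
      (2 * νg (frobNorm D ^ 2)) • D = (max (frobNorm S - σ) 0 / frobNorm S) • S := by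
  simp only [frobNorm_eq_norm]
  exact yield_dichotomy_iff hσ (mul_pos two_pos (hνg _ (sq_nonneg _)))

/-- Stress-activated (Bingham/Herschel–Bulkley type) dichotomy is equivalent to a
single explicit equation.  The right-hand side of (ii) is automatically `O` when
`S = O` since then the scalar factor multiplies the zero matrix. -/
theorem statement6 (σ : ℝ) (hσ : 0 < σ) (νg : ℝ → ℝ) (hνg : ∀ t, 0 ≤ t → 0 < νg t)
    (S D : Matrix (Fin 3) (Fin 3) ℝ) (hSsym : S.IsSymm) (hDsym : D.IsSymm) :
    ((frobNorm S ≤ σ ↔ D = 0) ∧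
      (σ < frobNorm S → S = (σ / frobNorm D) • D + (2 * νg (frobNorm D ^ 2)) • D)) ↔
      (2 * νg (frobNorm D ^ 2)) • D = (max (frobNorm S - σ) 0 / frobNorm S) • S :=
  statement6_general σ hσ νg hνg S D

end Frobenius
end

section
/- Let δ > 0 and let α_g : [0,∞) → (0,∞) be a (strictly positive) function. For symmetric real 3×3 matrices S and D, the following two conditions are equivalent: (i) |D| ≤ δ if and only if S = O, and whenever |D| > δ one has D = δ·S/|S| + α_g(|S|²)S; (ii) α_g(|S|²) S = ((|D| − δ)⁺/|D|) D, where the right-hand side is interpreted as O when D = O. -/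
section ActivatedFluid

variable {E : Type*} [NormedAddCommGroup E] [NormedSpace ℝ E] {δ a : ℝ} {S D : E}

theorem norm_eq_of_eq_smul_add_smul (hδ : 0 ≤ δ) (ha : 0 ≤ a) (hS : S ≠ 0)
    (hD : D = (δ / ‖S‖) • S + a • S) : ‖D‖ = δ + a * ‖S‖ := by
  have hS' : 0 < ‖S‖ := norm_pos_iff.mpr hS
  rw [hD, ← add_smul, norm_smul, Real.norm_of_nonneg (by positivity)]
  field_simp

theorem smul_eq_activation_of_eq_smul_add_smul (hδ : 0 ≤ δ) (ha : 0 < a) (hS : S ≠ 0)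
    (hD : D = (δ / ‖S‖) • S + a • S) :
    a • S = (max (‖D‖ - δ) 0 / ‖D‖) • D := by
  have hS' : 0 < ‖S‖ := norm_pos_iff.mpr hS
  have hnorm := norm_eq_of_eq_smul_add_smul hδ ha.le hS hD
  rw [hnorm, add_sub_cancel_left, max_eq_left (by positivity), hD, ← add_smul, smul_smul]
  congr 1
  field_simp

theorem eq_smul_add_smul_of_smul_eq_activation (hδ : 0 < δ) (ha : 0 < a) (hDδ : δ < ‖D‖)
    (h : a • S = (max (‖D‖ - δ) 0 / ‖D‖) • D) :
    S ≠ 0 ∧ D = (δ / ‖S‖) • S + a • S := by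
  have hD : 0 < ‖D‖ := hδ.trans hDδ
  rw [max_eq_left (by linarith)] at h
  have hnorm : a * ‖S‖ = ‖D‖ - δ := by
    simpa [norm_smul, abs_of_pos ha, abs_of_pos (sub_pos.mpr hDδ), hD.ne'] using congrArg norm h
  have hS : 0 < ‖S‖ := by nlinarith
  refine ⟨norm_pos_iff.mp hS, ?_⟩
  have hDS : D = (‖D‖ / (‖D‖ - δ) * a) • S := by
    rw [← smul_smul, h, smul_smul, div_mul_div_cancel₀ (by linarith), div_self hD.ne', one_smul]
  rw [hDS, ← add_smul, ← hnorm]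
  congr 1
  field_simp
  linarith

theorem activation_dichotomy_iff (hδ : 0 < δ) (ha : 0 < a) :
    ((‖D‖ ≤ δ ↔ S = 0) ∧ (δ < ‖D‖ → D = (δ / ‖S‖) • S + a • S)) ↔
      a • S = (max (‖D‖ - δ) 0 / ‖D‖) • D := by
  constructor
  · rintro ⟨hzero, hactive⟩
    rcases le_or_gt ‖D‖ δ with hDδ | hDδ
    · simp [hzero.mp hDδ, max_eq_right (sub_nonpos.mpr hDδ)]
    · exact smul_eq_activation_of_eq_smul_add_smul hδ.le ha
        (fun h0 => hDδ.not_ge (hzero.mpr h0)) (hactive hDδ)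
  · intro h
    have hactive (hDδ : δ < ‖D‖) := eq_smul_add_smul_of_smul_eq_activation hδ ha hDδ h
    refine ⟨⟨fun hDδ => ?_, fun hS => ?_⟩, fun hDδ => (hactive hDδ).2⟩
    · rw [max_eq_right (sub_nonpos.mpr hDδ), zero_div, zero_smul] at h
      exact (smul_eq_zero.mp h).resolve_left ha.ne'
    · exact not_lt.mp fun hDδ => (hactive hDδ).1 hS

end ActivatedFluid

section Frobenius

attribute [local instance] Matrix.frobeniusNormedAddCommGroup Matrix.frobeniusNormedSpace

end Frobenius

theorem statement7_general (δ : ℝ) (hδ : 0 < δ) (αg : ℝ → ℝ) (hαg : ∀ t, 0 ≤ t → 0 < αg t)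
    (S D : Matrix (Fin 3) (Fin 3) ℝ) :
    ((frobNorm D ≤ δ ↔ S = 0) ∧
      (δ < frobNorm D → D = (δ / frobNorm S) • S + (αg (frobNorm S ^ 2)) • S)) ↔
      (αg (frobNorm S ^ 2)) • S = (max (frobNorm D - δ) 0 / frobNorm D) • D := by
  let _ : NormedAddCommGroup (Matrix (Fin 3) (Fin 3) ℝ) := Matrix.frobeniusNormedAddCommGroup
  let _ : NormedSpace ℝ (Matrix (Fin 3) (Fin 3) ℝ) := Matrix.frobeniusNormedSpace
  simp only [frobNorm_eq_norm]
  exact activation_dichotomy_iff hδ (hαg _ (sq_nonneg _))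

/-- Shear-rate-activated (activated Euler fluid) dichotomy is equivalent to a
single explicit relation for the stress.  The right-hand side of (ii) is
automatically `O` when `D = O` since then the scalar factor multiplies the zero
matrix. -/
theorem statement7 (δ : ℝ) (hδ : 0 < δ) (αg : ℝ → ℝ) (hαg : ∀ t, 0 ≤ t → 0 < αg t)
    (S D : Matrix (Fin 3) (Fin 3) ℝ) (hSsym : S.IsSymm) (hDsym : D.IsSymm) :
    ((frobNorm D ≤ δ ↔ S = 0) ∧
      (δ < frobNorm D → D = (δ / frobNorm S) • S + (αg (frobNorm S ^ 2)) • S)) ↔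
      (αg (frobNorm S ^ 2)) • S = (max (frobNorm D - δ) 0 / frobNorm D) • D :=
  statement7_general δ hδ αg hαg S D
end

section
/- Let γ > 0 and s* > 0. For vectors s, v ∈ ℝ³, the following two conditions are equivalent: (i) |s| ≤ s* if and only if v = 0, and whenever |s| > s* one has s = s*·v/|v| + γ v; (ii) γ v = ((|s| − s*)⁺/|s|) s, where the right-hand side is interpreted as 0 when s = 0. -/
/-- The no-slip/Navier-slip (stick/slip) boundary condition: the activated
dichotomy (i) is equivalent to the single explicit equation (ii).  The
right-hand side of (ii) is automatically `0` when `s = 0` since then the scalar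
factor multiplies the zero vector. -/
theorem statement8 (γ sstar : ℝ) (hγ : 0 < γ) (hsstar : 0 < sstar)
    (s v : EuclideanSpace ℝ (Fin 3)) :
    ((‖s‖ ≤ sstar ↔ v = 0) ∧
      (sstar < ‖s‖ → s = (sstar / ‖v‖) • v + γ • v)) ↔
      γ • v = (max (‖s‖ - sstar) 0 / ‖s‖) • s := by
  constructor
  · rintro ⟨h1, h2⟩
    by_cases hle : ‖s‖ ≤ sstar
    · have hv : v = 0 := h1.mp hle
      simp [hv, max_eq_right (by linarith : ‖s‖ - sstar ≤ 0)]
    · push_neg at hle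
      have hv : v ≠ 0 := fun hv0 => absurd (h1.mpr hv0) (not_le.mpr hle)
      have hvn : (0:ℝ) < ‖v‖ := norm_pos_iff.mpr hv
      have hc : (0:ℝ) < sstar / ‖v‖ + γ := by positivity
      have hseq : s = (sstar / ‖v‖ + γ) • v := by rw [h2 hle, add_smul]
      have hns : ‖s‖ = sstar + γ * ‖v‖ := by
        rw [hseq, norm_smul, Real.norm_eq_abs, abs_of_pos hc]
        field_simp
      have hmax : max (‖s‖ - sstar) 0 = γ * ‖v‖ := by
        have := mul_pos hγ hvn
        rw [hns, max_eq_left (by linarith)]; ring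
      rw [hmax, hseq, norm_smul, Real.norm_eq_abs, abs_of_pos hc, smul_smul]
      congr 1
      field_simp
  · intro h
    by_cases hle : ‖s‖ ≤ sstar
    · have hmax : max (‖s‖ - sstar) 0 = 0 := max_eq_right (by linarith)
      have hv : v = 0 := by
        have h0 : γ • v = 0 := by rw [h, hmax]; simp
        simpa [hγ.ne'] using smul_eq_zero.mp h0
      exact ⟨⟨fun _ => hv, fun _ => hle⟩, fun h' => absurd h' (not_lt.mpr hle)⟩
    · push_neg at hle
      have hs0 : s ≠ 0 := by
        intro h0; rw [h0] at hle; simp at hle; linarith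
      have hns : (0:ℝ) < ‖s‖ := norm_pos_iff.mpr hs0
      have hmax : max (‖s‖ - sstar) 0 = ‖s‖ - sstar := max_eq_left (by linarith)
      set c : ℝ := (‖s‖ - sstar) / (γ * ‖s‖) with hc
      have hcpos : 0 < c := by
        apply div_pos
        · linarith
        · positivity
      have hveq : v = c • s := by
        rw [hmax] at h
        have hv : v = γ⁻¹ • ((‖s‖ - sstar) / ‖s‖) • s := by
          rw [← h, smul_smul, inv_mul_cancel₀ hγ.ne', one_smul]
        rw [hv, smul_smul, hc]
        congr 1
        field_simp
      have hnv : ‖v‖ = c * ‖s‖ := by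
        rw [hveq, norm_smul, Real.norm_eq_abs, abs_of_pos hcpos]
      have hvne : v ≠ 0 := by
        rw [hveq]; exact smul_ne_zero hcpos.ne' hs0
      refine ⟨⟨fun hle' => absurd hle' (not_le.mpr hle), fun h0 => absurd h0 hvne⟩,
        fun _ => ?_⟩
      rw [hnv, hveq, smul_smul, smul_smul, ← add_smul]
      have hone : sstar / (c * ‖s‖) * c + γ * c = 1 := by
        have h1 : ‖s‖ ≠ 0 := hns.ne'
        have h2 : ‖s‖ - sstar ≠ 0 := sub_ne_zero.mpr (ne_of_gt hle)
        rw [hc]; field_simp; ring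
      rw [hone, one_smul]
end

section
/- Let γ > 0 and v* > 0. For vectors s, v ∈ ℝ³, the following two conditions are equivalent: (i) |v| ≤ v* if and only if s = 0, and whenever |v| > v* one has v = v*·s/|s| + (1/γ) s; (ii) s = γ ((|v| − v*)⁺/|v|) v, where the right-hand side is interpreted as 0 when v = 0. -/
/-- The free-slip/Navier-slip boundary condition: the activated dichotomy (i)
is equivalent to the single explicit equation (ii).  The right-hand side of
(ii) is automatically `0` when `v = 0` since then the scalar factor multiplies
the zero vector. -/
theorem statement9 (γ vstar : ℝ) (hγ : 0 < γ) (hvstar : 0 < vstar)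
    (s v : EuclideanSpace ℝ (Fin 3)) :
    ((‖v‖ ≤ vstar ↔ s = 0) ∧
      (vstar < ‖v‖ → v = (vstar / ‖s‖) • s + (1 / γ) • s)) ↔
      s = (γ * (max (‖v‖ - vstar) 0 / ‖v‖)) • v := by
  constructor
  · rintro ⟨h1, h2⟩
    rcases le_or_gt ‖v‖ vstar with h | h
    · have hs : s = 0 := h1.mp h
      rw [hs, max_eq_right (by linarith : ‖v‖ - vstar ≤ 0)]
      simp
    · have hv0 : 0 < ‖v‖ := lt_trans hvstar h
      have hs : s ≠ 0 := fun h0 => absurd (h1.mpr h0) (not_le.mpr h)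
      have hns : 0 < ‖s‖ := norm_pos_iff.mpr hs
      have hvs : v = (vstar / ‖s‖ + 1 / γ) • s := by rw [h2 h, add_smul]
      have hlam : 0 < vstar / ‖s‖ + 1 / γ := by positivity
      have hnorm : ‖v‖ = (vstar / ‖s‖ + 1 / γ) * ‖s‖ := by
        rw [hvs, norm_smul, Real.norm_eq_abs, abs_of_pos hlam]
      have hss : ‖s‖ = γ * (‖v‖ - vstar) := by
        field_simp at hnorm
        nlinarith
      rw [max_eq_left (by linarith : (0:ℝ) ≤ ‖v‖ - vstar)]
      nth_rewrite 3 [hvs]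
      rw [smul_smul]
      have hcoef : γ * ((‖v‖ - vstar) / ‖v‖) * (vstar / ‖s‖ + 1 / γ) = 1 := by
        rw [hss]
        have h1' : ‖v‖ - vstar ≠ 0 := ne_of_gt (by linarith)
        field_simp
        ring
      rw [hcoef, one_smul]
  · intro hs
    rcases le_or_gt ‖v‖ vstar with h | h
    · rw [max_eq_right (by linarith : ‖v‖ - vstar ≤ 0)] at hs
      simp at hs
      exact ⟨⟨fun _ => hs, fun _ => h⟩, fun hc => absurd h (not_le.mpr hc)⟩
    · have hv0 : 0 < ‖v‖ := lt_trans hvstar h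
      have hvne : v ≠ 0 := norm_pos_iff.mp hv0
      rw [max_eq_left (by linarith : (0:ℝ) ≤ ‖v‖ - vstar)] at hs
      have hc : 0 < γ * ((‖v‖ - vstar) / ‖v‖) :=
        mul_pos hγ (div_pos (by linarith) hv0)
      have hsne : s ≠ 0 := by
        rw [hs]; exact smul_ne_zero (ne_of_gt hc) hvne
      have hss : ‖s‖ = γ * (‖v‖ - vstar) := by
        rw [hs, norm_smul, Real.norm_eq_abs, abs_of_pos hc]
        field_simp
      refine ⟨⟨fun hle => absurd h (not_lt.mpr hle), fun h0 => absurd h0 hsne⟩, fun _ => ?_⟩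
      have hsub : ‖v‖ - vstar ≠ 0 := ne_of_gt (by linarith)
      have hc1 : (vstar / (γ * (‖v‖ - vstar)) + 1 / γ) * (γ * ((‖v‖ - vstar) / ‖v‖)) = 1 := by
        field_simp
        ring
      rw [hss, ← add_smul, hs, smul_smul, hc1, one_smul]
end

section
/- Let δ > 0, C ∈ ℝ with C ≠ 0, and y₀, u₀ ∈ ℝ. Define u : ℝ → ℝ by u(y) = −C( (y−y₀)² + √2 δ |y−y₀| / |C| ) + u₀. Then u is continuous on ℝ, and for every y ≠ y₀ the function u is twice differentiable at y with u''(y) = −2C and |u'(y)| = 2|C||y−y₀| + √2 δ > √2 δ; moreover the one-sided derivatives at y₀ satisfy u'(y₀±) = ∓ √2 δ C/|C|. In particular u solves H(|u'| − √2 δ) u'' = −2C at every y ≠ y₀, where H(t) = 1 for t > 0 and H(t) = 0 otherwise. -/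
/-!
Away from `y₀` the function `|y - y₀|` agrees near `y` with `sign (y - y₀) * (y - y₀)`, so there
`u` is locally a quadratic polynomial with `u'' = -2C`, and with `a = √2 δ / |C|` one gets
`|u'(y)| = |C| (2 |y - y₀| + a)`. At `y₀` itself the two one-sided derivatives are those of the
two polynomial branches `-C ((y - y₀)² ± a (y - y₀)) + u₀`.
-/

open Filter Topology

lemma abs_two_mul_add_mul_sign {a : ℝ} (ha : 0 ≤ a) {x : ℝ} (hx : x ≠ 0) :
    |2 * x + a * SignType.sign x| = 2 * |x| + a := by
  rcases hx.lt_or_gt with hx | hx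
  · rw [sign_neg hx, SignType.coe_neg, SignType.coe_one, abs_of_neg hx, abs_of_neg (by linarith)]
    ring
  · rw [sign_pos hx, SignType.coe_one, abs_of_pos hx, abs_of_pos (by linarith)]
    ring

section ShearProfile

variable (c a d y₀ : ℝ)

lemma hasDerivAt_quadratic_add_linear (s y : ℝ) :
    HasDerivAt (fun z => c * ((z - y₀) ^ 2 + a * (s * (z - y₀))) + d)
      (c * (2 * (y - y₀) + a * s)) y := by
  have hz := (hasDerivAt_id y).sub_const y₀
  exact (((hz.pow 2).add ((hz.const_mul s).const_mul a)).const_mul c |>.add_const d).congr_deriv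
    (by simp only [id_eq]; ring)

lemma hasDerivWithinAt_sq_add_mul_abs_Ici :
    HasDerivWithinAt (fun z => c * ((z - y₀) ^ 2 + a * |z - y₀|) + d) (c * a) (Set.Ici y₀) y₀ := by
  refine ((hasDerivAt_quadratic_add_linear c a d y₀ 1 y₀).hasDerivWithinAt.congr_of_mem
    (fun z (hz : y₀ ≤ z) => ?_) Set.self_mem_Ici).congr_deriv (by ring)
  rw [abs_of_nonneg (sub_nonneg.mpr hz), one_mul]

lemma hasDerivWithinAt_sq_add_mul_abs_Iic :
    HasDerivWithinAt (fun z => c * ((z - y₀) ^ 2 + a * |z - y₀|) + d) (-(c * a)) (Set.Iic y₀) y₀ := by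
  refine ((hasDerivAt_quadratic_add_linear c a d y₀ (-1) y₀).hasDerivWithinAt.congr_of_mem
    (fun z (hz : z ≤ y₀) => ?_) Set.self_mem_Iic).congr_deriv (by ring)
  rw [abs_of_nonpos (sub_nonpos.mpr hz), neg_one_mul]

variable {y₀}

lemma abs_sub_eventuallyEq_sign_mul {y : ℝ} (hy : y ≠ y₀) :
    (fun z => |z - y₀|) =ᶠ[𝓝 y] fun z => (SignType.sign (y - y₀) : ℝ) * (z - y₀) := by
  rcases hy.lt_or_gt with hy | hy
  · filter_upwards [Iio_mem_nhds hy] with z (hz : z < y₀)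
    simp [sign_neg (sub_neg.mpr hy), abs_of_neg (sub_neg.mpr hz)]
  · filter_upwards [Ioi_mem_nhds hy] with z (hz : y₀ < z)
    simp [sign_pos (sub_pos.mpr hy), abs_of_pos (sub_pos.mpr hz)]

lemma sq_add_mul_abs_eventuallyEq {y : ℝ} (hy : y ≠ y₀) :
    (fun z => c * ((z - y₀) ^ 2 + a * |z - y₀|) + d) =ᶠ[𝓝 y]
      fun z => c * ((z - y₀) ^ 2 + a * ((SignType.sign (y - y₀) : ℝ) * (z - y₀))) + d := by
  filter_upwards [abs_sub_eventuallyEq_sign_mul hy] with z hz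
  rw [hz]

lemma hasDerivAt_sq_add_mul_abs {y : ℝ} (hy : y ≠ y₀) :
    HasDerivAt (fun z => c * ((z - y₀) ^ 2 + a * |z - y₀|) + d)
      (c * (2 * (y - y₀) + a * SignType.sign (y - y₀))) y :=
  (hasDerivAt_quadratic_add_linear c a d y₀ _ y).congr_of_eventuallyEq
    (sq_add_mul_abs_eventuallyEq c a d hy)

lemma hasDerivAt_deriv_sq_add_mul_abs {y : ℝ} (hy : y ≠ y₀) :
    HasDerivAt (deriv fun z => c * ((z - y₀) ^ 2 + a * |z - y₀|) + d) (2 * c) y := by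
  have hderiv : deriv (fun z => c * ((z - y₀) ^ 2 + a * ((SignType.sign (y - y₀) : ℝ) * (z - y₀))) + d)
      = fun z => c * (2 * (z - y₀) + a * SignType.sign (y - y₀)) :=
    funext fun z => (hasDerivAt_quadratic_add_linear c a d y₀ _ z).deriv
  refine HasDerivAt.congr_of_eventuallyEq ?_ (sq_add_mul_abs_eventuallyEq c a d hy).deriv
  rw [hderiv]
  have hz := (hasDerivAt_id y).sub_const y₀
  exact (((hz.const_mul 2).add_const _).const_mul c).congr_deriv (by ring)

end ShearProfile

/-- Simple shear flow solutions of the Euler/Navier-Stokes fluid: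
the profile `u(y) = −C((y−y₀)² + √2 δ |y−y₀|/|C|) + u₀` is continuous, twice
differentiable away from `y₀` with `u'' = −2C` and `|u'| = 2|C||y−y₀| + √2 δ > √2 δ`
there, has the stated one-sided derivatives at `y₀`, and solves
`H(|u'| − √2 δ) u'' = −2C` at every `y ≠ y₀`. -/
theorem statement10 (δ C y₀ u₀ : ℝ) (hδ : 0 < δ) (hC : C ≠ 0)
    (u : ℝ → ℝ)
    (hu : ∀ y, u y = -C * ((y - y₀) ^ 2 + Real.sqrt 2 * δ * |y - y₀| / |C|) + u₀)
    (H : ℝ → ℝ) (hH : ∀ t, H t = if 0 < t then 1 else 0) :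
    Continuous u ∧
    (∀ y, y ≠ y₀ →
      HasDerivAt u (deriv u y) y ∧
      HasDerivAt (deriv u) (-(2 * C)) y ∧
      |deriv u y| = 2 * |C| * |y - y₀| + Real.sqrt 2 * δ ∧
      Real.sqrt 2 * δ < |deriv u y| ∧
      H (|deriv u y| - Real.sqrt 2 * δ) * deriv (deriv u) y = -(2 * C)) ∧
    HasDerivWithinAt u (-(Real.sqrt 2 * δ * C / |C|)) (Set.Ici y₀) y₀ ∧
    HasDerivWithinAt u (Real.sqrt 2 * δ * C / |C|) (Set.Iic y₀) y₀ := by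
  have hC' : 0 < |C| := abs_pos.mpr hC
  set a := Real.sqrt 2 * δ / |C| with ha
  have ha₀ : 0 ≤ a := by positivity
  have hCa : |C| * a = Real.sqrt 2 * δ := by rw [ha]; field_simp
  have hprofile : u = fun z => -C * ((z - y₀) ^ 2 + a * |z - y₀|) + u₀ := by
    funext z; rw [hu z, ha]; ring
  refine ⟨hprofile ▸ by fun_prop, fun y hy => ?_, ?_, ?_⟩
  · have hd : HasDerivAt u (-C * (2 * (y - y₀) + a * SignType.sign (y - y₀))) y :=
      hprofile ▸ hasDerivAt_sq_add_mul_abs (-C) a u₀ hy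
    have hdd : HasDerivAt (deriv u) (-(2 * C)) y :=
      hprofile ▸ (hasDerivAt_deriv_sq_add_mul_abs (-C) a u₀ hy).congr_deriv (by ring)
    have habs : |deriv u y| = 2 * |C| * |y - y₀| + Real.sqrt 2 * δ := by
      rw [hd.deriv, abs_mul, abs_neg, abs_two_mul_add_mul_sign ha₀ (sub_ne_zero.mpr hy)]
      linear_combination hCa
    have hgt : Real.sqrt 2 * δ < |deriv u y| := by
      have := abs_pos.mpr (sub_ne_zero.mpr hy)
      rw [habs]; nlinarith
    refine ⟨hd.differentiableAt.hasDerivAt, hdd, habs, hgt, ?_⟩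
    rw [hH, if_pos (sub_pos.mpr hgt), hdd.deriv, one_mul]
  · exact hprofile ▸ (hasDerivWithinAt_sq_add_mul_abs_Ici (-C) a u₀ y₀).congr_deriv (by rw [ha]; ring)
  · exact hprofile ▸ (hasDerivWithinAt_sq_add_mul_abs_Iic (-C) a u₀ y₀).congr_deriv (by rw [ha]; ring)
end

section
/- Let δ > 0, ε > 0, C ∈ ℝ with C ≠ 0, and y₀, u₀ ∈ ℝ. Set t₀ = √2 δ ε / (2|C|) and define u : ℝ → ℝ by u(y) = −(C/ε)(y−y₀)² + u₀ for |y−y₀| ≤ t₀, and u(y) = −(C/(1+ε))( (y−y₀)² + √2 δ |y−y₀|/|C| − ε(√2 δ/(2C))² ) + u₀ for |y−y₀| ≥ t₀. Then u is continuously differentiable on ℝ with |u'(y)| ≤ √2 δ for |y−y₀| ≤ t₀ and |u'(y)| > √2 δ for |y−y₀| > t₀, u is twice differentiable at every y with |y−y₀| ∉ {t₀}, and at every such y it satisfies (ε + H(|u'(y)| − √2 δ)) u''(y) = −2C, where H(t) = 1 for t > 0 and H(t) = 0 otherwise. -/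
/-!
Put `x = y - y₀` and `a = t₀`. Both pieces of `u` are pieces of one formula,
`u = u₀ - 2C/(1+ε) · (x²/2 + huber a x / ε)`, where `huber a` is the Huber function
(`x²/2` for `|x| ≤ a`, `a|x| - a²/2` beyond). It is `C¹` with derivative the clipping
`clip a x = max (-a) (min a x)`, so `u' = -2C/(1+ε) · (x + clip a x / ε)` is continuous, and
`|u'|` is `2|C||x|/ε` inside and `2|C|/(1+ε) · (|x| + a/ε)` outside; the value of `t₀` is exactly
the one for which both equal `√2 δ` at `|x| = a`. Away from `|x| = a` the derivative of the clipping
is `1` or `0`, which gives `u'' = -2C/ε` inside and `u'' = -2C/(1+ε)` outside.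
-/

open Set Filter Topology

theorem HasDerivAt.of_isClosed_cover {𝕜 F : Type*} [NontriviallyNormedField 𝕜]
    [NormedAddCommGroup F] [NormedSpace 𝕜 F] {A B : Set 𝕜} (hA : IsClosed A)
    (hB : IsClosed B) (hAB : A ∪ B = univ) {u p q d : 𝕜 → F} (hup : EqOn u p A) (huq : EqOn u q B)
    (hp : ∀ y ∈ A, HasDerivAt p (d y) y) (hq : ∀ y ∈ B, HasDerivAt q (d y) y) (y : 𝕜) :
    HasDerivAt u (d y) y := by
  have hy : y ∈ A ∪ B := hAB ▸ mem_univ y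
  wlog hyA : y ∈ A generalizing A B p q
  · exact this hB hA (union_comm A B ▸ hAB) huq hup hq hp (union_comm A B ▸ hy)
      (hy.resolve_left hyA)
  by_cases hyB : y ∈ B
  · rw [← hasDerivWithinAt_univ, ← hAB]
    exact ((hp y hyA).hasDerivWithinAt.congr hup (hup hyA)).union
      ((hq y hyB).hasDerivWithinAt.congr huq (huq hyB))
  · refine (hp y hyA).congr_of_eventuallyEq <|
      mem_of_superset (hB.isOpen_compl.mem_nhds hyB) fun z hz ↦ hup ?_
    exact (hAB ▸ mem_univ z : z ∈ A ∪ B).resolve_right hz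

noncomputable def huber (a x : ℝ) : ℝ := if |x| ≤ a then x ^ 2 / 2 else a * |x| - a ^ 2 / 2

def clip (a x : ℝ) : ℝ := max (-a) (min a x)

section Clip

variable {a x : ℝ}

lemma clip_of_abs_le (h : |x| ≤ a) : clip a x = x := by
  rw [abs_le] at h
  simp [clip, h.1, h.2]

lemma clip_of_le (ha : 0 ≤ a) (h : a ≤ x) : clip a x = a := by
  rw [clip, min_eq_left h, max_eq_right (by linarith)]

lemma clip_of_le_neg (h : x ≤ -a) : clip a x = -a :=
  max_eq_left ((min_le_right a x).trans h)

lemma clip_of_le_abs (ha : 0 < a) (h : a ≤ |x|) : clip a x = a * SignType.sign x := by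
  rcases le_abs'.mp h with hx | hx
  · rw [clip_of_le_neg hx, sign_neg (by linarith)]; simp
  · rw [clip_of_le ha.le hx, sign_pos (by linarith)]; simp

@[fun_prop]
lemma continuous_clip : Continuous (clip a) := by
  unfold clip; fun_prop

lemma hasDerivAt_clip_of_abs_lt (h : |x| < a) : HasDerivAt (clip a) 1 x :=
  (hasDerivAt_id x).congr_of_eventuallyEq <|
    ((isOpen_lt continuous_abs continuous_const).eventually_mem h).mono
      fun _ hz ↦ clip_of_abs_le (le_of_lt hz)

lemma hasDerivAt_clip_of_lt_abs (ha : 0 ≤ a) (h : a < |x|) : HasDerivAt (clip a) 0 x := by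
  rcases lt_abs.mp h with hx | hx
  · exact (hasDerivAt_const x a).congr_of_eventuallyEq <|
      (eventually_gt_nhds hx).mono fun _ hz ↦ clip_of_le ha hz.le
  · exact (hasDerivAt_const x (-a)).congr_of_eventuallyEq <|
      (eventually_lt_nhds (show x < -a by linarith)).mono fun _ hz ↦ clip_of_le_neg hz.le

end Clip

lemma hasDerivAt_half_sq (x : ℝ) : HasDerivAt (fun x : ℝ ↦ x ^ 2 / 2) x x := by
  simpa using (hasDerivAt_pow 2 x).div_const 2

lemma hasDerivAt_huber {a : ℝ} (ha : 0 < a) (x : ℝ) : HasDerivAt (huber a) (clip a x) x := by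
  refine HasDerivAt.of_isClosed_cover (A := {x | |x| ≤ a}) (B := {x | a ≤ |x|})
    (p := fun x ↦ x ^ 2 / 2) (q := fun x ↦ a * |x| - a ^ 2 / 2)
    (isClosed_le continuous_abs continuous_const) (isClosed_le continuous_const continuous_abs)
    (eq_univ_of_forall fun x ↦ le_total |x| a) (fun x hx ↦ if_pos hx) (fun x hx ↦ ?_)
    (fun x hx ↦ by rw [clip_of_abs_le hx]; exact hasDerivAt_half_sq x) (fun x hx ↦ ?_) x
  · change huber a x = a * |x| - a ^ 2 / 2
    unfold huber
    split_ifs with hxa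
    · rw [← sq_abs, le_antisymm hxa hx]; ring
    · rfl
  · rw [clip_of_le_abs ha hx]
    exact ((hasDerivAt_abs (abs_pos.mp (ha.trans_le hx))).const_mul a).sub_const _

lemma hasDerivAt_half_sq_add_huber_div {a : ℝ} (ha : 0 < a) (ε x : ℝ) :
    HasDerivAt (fun x ↦ x ^ 2 / 2 + huber a x / ε) (x + clip a x / ε) x :=
  (hasDerivAt_half_sq x).add ((hasDerivAt_huber ha x).div_const ε)

section AbsAddClip

variable {a ε x : ℝ}

lemma abs_add_clip_div_le (hε : 0 < ε) (h : |x| ≤ a) :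
    |x + clip a x / ε| ≤ a * (1 + ε) / ε := by
  rw [clip_of_abs_le h, show x + x / ε = x * ((1 + ε) / ε) by field_simp; ring, abs_mul,
    abs_of_pos (div_pos (by linarith) hε), ← mul_div_assoc]
  gcongr

lemma lt_abs_add_clip_div (ha : 0 ≤ a) (hε : 0 < ε) (h : a < |x|) :
    a * (1 + ε) / ε < |x + clip a x / ε| := by
  have ha' : a * (1 + ε) / ε = a + a / ε := by field_simp; ring
  rw [ha']
  rcases lt_abs.mp h with hx | hx
  · rw [clip_of_le ha hx.le]
    exact lt_abs.mpr (Or.inl (by linarith))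
  · rw [clip_of_le_neg (by linarith), neg_div]
    exact lt_abs.mpr (Or.inr (by linarith))

end AbsAddClip

lemma shear_profile_eq_huber {ε C y₀ u₀ s t₀ : ℝ} {u : ℝ → ℝ} (hε : 0 < ε)
    (hC : C ≠ 0) (ht₀ : t₀ = s * ε / (2 * |C|))
    (hu₁ : ∀ y, |y - y₀| ≤ t₀ → u y = -(C / ε) * (y - y₀) ^ 2 + u₀)
    (hu₂ : ∀ y, t₀ ≤ |y - y₀| →
      u y = -(C / (1 + ε)) * ((y - y₀) ^ 2 + s * |y - y₀| / |C| - ε * (s / (2 * C)) ^ 2) + u₀) :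
    u = fun y ↦ u₀ - 2 * C / (1 + ε) * ((y - y₀) ^ 2 / 2 + huber t₀ (y - y₀) / ε) := by
  have hε1 : 1 + ε ≠ 0 := by positivity
  have hC' : |C| ≠ 0 := abs_ne_zero.mpr hC
  funext y
  by_cases h : |y - y₀| ≤ t₀
  · rw [hu₁ y h, huber, if_pos h]
    field_simp
    ring
  · rw [hu₂ y (le_of_not_ge h), huber, if_neg h, ht₀, div_pow, mul_pow, ← sq_abs C]
    field_simp
    ring

/-- Simple shear flow solutions of the regularized Euler/Navier-Stokes fluid:
the piecewise profile is C¹, has `|u'| ≤ √2 δ` inside the activation interval and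
`|u'| > √2 δ` outside, is twice differentiable away from `|y − y₀| = t₀`, and
solves `(ε + H(|u'| − √2 δ)) u'' = −2C` there. -/
theorem statement11 (δ ε C y₀ u₀ : ℝ) (hδ : 0 < δ) (hε : 0 < ε) (hC : C ≠ 0)
    (t₀ : ℝ) (ht₀ : t₀ = Real.sqrt 2 * δ * ε / (2 * |C|))
    (u : ℝ → ℝ)
    (hu₁ : ∀ y, |y - y₀| ≤ t₀ → u y = -(C / ε) * (y - y₀) ^ 2 + u₀)
    (hu₂ : ∀ y, t₀ ≤ |y - y₀| →
      u y = -(C / (1 + ε)) * ((y - y₀) ^ 2 + Real.sqrt 2 * δ * |y - y₀| / |C|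
              - ε * (Real.sqrt 2 * δ / (2 * C)) ^ 2) + u₀)
    (H : ℝ → ℝ) (hH : ∀ t, H t = if 0 < t then 1 else 0) :
    ContDiff ℝ 1 u ∧
    (∀ y, |y - y₀| ≤ t₀ → |deriv u y| ≤ Real.sqrt 2 * δ) ∧
    (∀ y, t₀ < |y - y₀| → Real.sqrt 2 * δ < |deriv u y|) ∧
    (∀ y, |y - y₀| ≠ t₀ → ∃ c : ℝ, HasDerivAt (deriv u) c y ∧
      (ε + H (|deriv u y| - Real.sqrt 2 * δ)) * c = -(2 * C)) := by
  have ht₀pos : 0 < t₀ := by rw [ht₀]; positivity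
  set k := 2 * C / (1 + ε) with hk
  have hthreshold : |k| * (t₀ * (1 + ε) / ε) = Real.sqrt 2 * δ := by
    rw [hk, ht₀, abs_div, abs_mul, abs_two, abs_of_pos (by linarith : 0 < 1 + ε)]
    field_simp
  have hu' (y : ℝ) : HasDerivAt u (-(k * (y - y₀ + clip t₀ (y - y₀) / ε))) y := by
    rw [shear_profile_eq_huber hε hC ht₀ hu₁ hu₂]
    exact (((hasDerivAt_half_sq_add_huber_div ht₀pos ε (y - y₀)).comp_sub_const y y₀).const_mul
      k).const_sub u₀
  have hderiv : deriv u = fun y ↦ -(k * (y - y₀ + clip t₀ (y - y₀) / ε)) :=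
    funext fun y ↦ (hu' y).deriv
  have hu'' (y d : ℝ) (hd : HasDerivAt (clip t₀) d (y - y₀)) :
      HasDerivAt (deriv u) (-(k * (1 + d / ε))) y := by
    rw [hderiv]
    exact ((((hasDerivAt_id y).sub_const y₀).add
      ((hd.comp_sub_const y y₀).div_const ε)).const_mul k).neg
  have hinner (y : ℝ) (hy : |y - y₀| ≤ t₀) : |deriv u y| ≤ Real.sqrt 2 * δ := by
    rw [hderiv, abs_neg, abs_mul, ← hthreshold]
    exact mul_le_mul_of_nonneg_left (abs_add_clip_div_le hε hy) (abs_nonneg k)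
  have houter (y : ℝ) (hy : t₀ < |y - y₀|) : Real.sqrt 2 * δ < |deriv u y| := by
    rw [hderiv, abs_neg, abs_mul, ← hthreshold]
    exact mul_lt_mul_of_pos_left (lt_abs_add_clip_div ht₀pos.le hε hy)
      (abs_pos.mpr (div_ne_zero (mul_ne_zero two_ne_zero hC) (by linarith)))
  refine ⟨contDiff_one_iff_deriv.mpr
    ⟨fun y ↦ (hu' y).differentiableAt, hderiv ▸ by fun_prop⟩, hinner, houter, fun y hy ↦ ?_⟩
  rcases hy.lt_or_gt with hy | hy
  · refine ⟨_, hu'' y 1 (hasDerivAt_clip_of_abs_lt hy), ?_⟩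
    rw [hH, if_neg (by linarith [hinner y hy.le]), hk]
    field_simp
    ring
  · refine ⟨_, hu'' y 0 (hasDerivAt_clip_of_lt_abs ht₀pos.le hy), ?_⟩
    rw [hH, if_pos (by linarith [houter y hy]), hk]
    field_simp
    ring
end

section
/- Let r > 1 and δ ≥ 0. Define T₁ and T₂ on symmetric real 3×3 matrices by T₁(D) = ((|D| − δ)⁺/|D|) |D|^{r−2} D and T₂(D) = ((|D| − δ)⁺/|D|) (1 + |D|^{r−2}) D for D ≠ O, with T₁(O) = T₂(O) = O. Then both T₁ and T₂ are monotone: (Tᵢ(D₁) − Tᵢ(D₂)) : (D₁ − D₂) ≥ 0 for all symmetric real 3×3 matrices D₁, D₂ and i = 1, 2. -/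
/-- Entrywise product `A : B = Σᵢⱼ Aᵢⱼ Bᵢⱼ`. -/
def mdot (A B : Matrix (Fin 3) (Fin 3) ℝ) : ℝ := ∑ i, ∑ j, A i j * B i j

lemma mdot_self (A : Matrix (Fin 3) (Fin 3) ℝ) : mdot A A = frobNorm A ^ 2 := by
  rw [frobNorm, Real.sq_sqrt (by positivity)]
  simp [mdot, sq]

lemma mdot_le (A B : Matrix (Fin 3) (Fin 3) ℝ) : mdot A B ≤ frobNorm A * frobNorm B := by
  have h := Real.sum_mul_le_sqrt_mul_sqrt Finset.univ
    (fun p : Fin 3 × Fin 3 => A p.1 p.2) (fun p : Fin 3 × Fin 3 => B p.1 p.2)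
  simpa [mdot, frobNorm, Fintype.sum_prod_type] using h

lemma mdot_expand (a b : ℝ) (A B : Matrix (Fin 3) (Fin 3) ℝ) :
    mdot (a • A - b • B) (A - B)
      = a * mdot A A + b * mdot B B - (a + b) * mdot A B := by
  simp only [mdot, Matrix.sub_apply, Matrix.smul_apply, smul_eq_mul,
    Finset.mul_sum, ← Finset.sum_sub_distrib, ← Finset.sum_add_distrib]
  refine Finset.sum_congr rfl fun i _ => Finset.sum_congr rfl fun j _ => by ring

/-- key matrix inequality -/
lemma key (a b : ℝ) (ha : 0 ≤ a) (hb : 0 ≤ b) (A B : Matrix (Fin 3) (Fin 3) ℝ)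
    (hab : 0 ≤ (a * frobNorm A - b * frobNorm B) * (frobNorm A - frobNorm B)) :
    0 ≤ mdot (a • A - b • B) (A - B) := by
  rw [mdot_expand, mdot_self, mdot_self]
  have h := mul_le_mul_of_nonneg_left (mdot_le A B) (by linarith : (0:ℝ) ≤ a + b)
  nlinarith [hab]

/-- monotonicity of t ↦ (t-δ)⁺ t^(r-2) on [0,∞) -/
lemma gmono (r δ : ℝ) (hr : 1 < r) (hδ : 0 ≤ δ) {s t : ℝ} (hs : 0 ≤ s) (hst : s ≤ t) :
    max (s - δ) 0 * s ^ (r - 2) ≤ max (t - δ) 0 * t ^ (r - 2) := by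
  rcases le_or_gt t δ with htδ | htδ
  · rw [max_eq_right (by linarith), max_eq_right (by linarith)]; simp
  · have ht0 : 0 < t := lt_of_le_of_lt hδ htδ
    have hmt : max (t - δ) 0 = t - δ := max_eq_left (by linarith)
    rcases le_or_gt s δ with hsδ | hsδ
    · rw [max_eq_right (by linarith), hmt]
      have := Real.rpow_nonneg ht0.le (r - 2)
      nlinarith
    · have hs0 : 0 < s := lt_of_le_of_lt hδ hsδ
      have hms : max (s - δ) 0 = s - δ := max_eq_left (by linarith)
      rw [hms, hmt]
      rcases le_or_gt 2 r with h2 | h2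
      · have h1 : s ^ (r - 2) ≤ t ^ (r - 2) :=
          Real.rpow_le_rpow hs0.le hst (by linarith)
        have := Real.rpow_nonneg hs0.le (r - 2)
        nlinarith
      · -- write (t-δ) t^(r-2) = t^(r-1) - δ t^(r-2)
        have hid : ∀ u : ℝ, 0 < u → (u - δ) * u ^ (r - 2) = u ^ (r - 1) - δ * u ^ (r - 2) := by
          intro u hu
          have : u ^ (r - 1) = u ^ (r - 2) * u := by
            have h := Real.rpow_add hu (r - 2) 1
            simpa [Real.rpow_one, show r - 2 + 1 = r - 1 by ring] using h
          rw [this]; ring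
        rw [hid s hs0, hid t ht0]
        have h1 : s ^ (r - 1) ≤ t ^ (r - 1) := Real.rpow_le_rpow hs0.le hst (by linarith)
        have h2' : t ^ (r - 2) ≤ s ^ (r - 2) :=
          Real.rpow_le_rpow_of_nonpos hs0 hst (by linarith)
        nlinarith

/-- the scalar coefficient times the norm equals g(norm) -/
lemma coeff_mul (δ S t : ℝ) (hδ : 0 ≤ δ) (ht : 0 ≤ t) :
    (max (t - δ) 0 / t * S) * t = max (t - δ) 0 * S := by
  rcases eq_or_lt_of_le ht with h | h
  · rw [← h]; simp [max_eq_right (by linarith : -δ ≤ (0:ℝ))]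
  · field_simp

/-- The constitutive functions of the Euler/power-law fluid
(`𝒮(d) = d^{r−2}`) and of the Euler/Ladyzhenskaya type fluid
(`𝒮(d) = 1 + d^{r−2}`) are monotone.  (The defining formulas automatically
give `T₁ O = T₂ O = O` since the scalar multiplies the zero matrix.) -/
theorem statement14 (r δ : ℝ) (hr : 1 < r) (hδ : 0 ≤ δ)
    (T₁ T₂ : Matrix (Fin 3) (Fin 3) ℝ → Matrix (Fin 3) (Fin 3) ℝ)
    (hT₁ : ∀ D, T₁ D = ((max (frobNorm D - δ) 0 / frobNorm D)
      * frobNorm D ^ (r - 2)) • D)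
    (hT₂ : ∀ D, T₂ D = ((max (frobNorm D - δ) 0 / frobNorm D)
      * (1 + frobNorm D ^ (r - 2))) • D)
    (D₁ D₂ : Matrix (Fin 3) (Fin 3) ℝ) (h₁ : D₁.IsSymm) (h₂ : D₂.IsSymm) :
    0 ≤ mdot (T₁ D₁ - T₁ D₂) (D₁ - D₂) ∧ 0 ≤ mdot (T₂ D₁ - T₂ D₂) (D₁ - D₂) := by
  set n₁ := frobNorm D₁ with hn₁
  set n₂ := frobNorm D₂ with hn₂
  have hn₁0 : 0 ≤ n₁ := frobNorm_nonneg _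
  have hn₂0 : 0 ≤ n₂ := frobNorm_nonneg _
  have hmax₁ : 0 ≤ max (n₁ - δ) 0 := le_max_right _ _
  have hmax₂ : 0 ≤ max (n₂ - δ) 0 := le_max_right _ _
  -- monotone product claim for g including the "+1" case
  have hg : ∀ S₁ S₂ : ℝ, (∀ s t, 0 ≤ s → s ≤ t →
      max (s - δ) 0 * 0 ≤ 0) → True := fun _ _ _ => trivial
  have main : ∀ a b : ℝ, 0 ≤ a → 0 ≤ b →
      (a * n₁ - b * n₂) * (n₁ - n₂) ≥ 0 →
      0 ≤ mdot ((a • D₁ : Matrix (Fin 3) (Fin 3) ℝ) - b • D₂) (D₁ - D₂) :=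
    fun a b ha hb hab => key a b ha hb D₁ D₂ hab
  constructor
  · rw [hT₁ D₁, hT₁ D₂]
    apply main
    · positivity
    · positivity
    · rw [coeff_mul δ _ n₁ hδ hn₁0, coeff_mul δ _ n₂ hδ hn₂0]
      rcases le_total n₁ n₂ with h | h
      · nlinarith [gmono r δ hr hδ hn₁0 h]
      · exact mul_nonneg (by linarith [gmono r δ hr hδ hn₂0 h]) (by linarith)
  · rw [hT₂ D₁, hT₂ D₂]
    have hp₁ : 0 ≤ n₁ ^ (r - 2) := Real.rpow_nonneg hn₁0 _
    have hp₂ : 0 ≤ n₂ ^ (r - 2) := Real.rpow_nonneg hn₂0 _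
    apply main
    · positivity
    · positivity
    · rw [coeff_mul δ _ n₁ hδ hn₁0, coeff_mul δ _ n₂ hδ hn₂0]
      have e₁ : max (n₁ - δ) 0 * (1 + n₁ ^ (r-2))
          = max (n₁ - δ) 0 + max (n₁ - δ) 0 * n₁ ^ (r-2) := by ring
      have e₂ : max (n₂ - δ) 0 * (1 + n₂ ^ (r-2))
          = max (n₂ - δ) 0 + max (n₂ - δ) 0 * n₂ ^ (r-2) := by ring
      rw [e₁, e₂]
      rcases le_total n₁ n₂ with h | h
      · have hm : max (n₁ - δ) 0 ≤ max (n₂ - δ) 0 :=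
          max_le_max (by linarith) le_rfl
        nlinarith [gmono r δ hr hδ hn₁0 h]
      · have hm : max (n₂ - δ) 0 ≤ max (n₁ - δ) 0 :=
          max_le_max (by linarith) le_rfl
        exact mul_nonneg (by linarith [gmono r δ hr hδ hn₂0 h]) (by linarith)
end

section
/- Let A ⊂ ℝ^M be a measurable set of finite Lebesgue measure, and let (v_n) be a sequence of integrable real-valued functions on A such that v_n → 0 almost everywhere on A and v_n converges weakly in L¹(A) to some v ∈ L¹(A), i.e. ∫_A v_n g → ∫_A v g for every essentially bounded measurable g : A → ℝ. Then v = 0 almost everywhere on A and v_n → 0 strongly in L¹(A), i.e. ∫_A |v_n| → 0. -/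
/-!
By Vitali's convergence theorem it suffices to show that `(vₙ)` is uniformly integrable; this is
the Vitali–Hahn–Saks argument. Clamping the test function to `[0, 1]` makes
`g ↦ ∫ vₙ · clamp g` a continuous functional on the complete space `L¹`, and these functionals
converge pointwise, so by Baire they are uniformly Cauchy (for `n ≥ N`) on some ball `B(g, r)`.
Setting `g` to `1`, resp. `0`, on a set `s` of small measure stays inside the ball and changes the
functional by exactly `∫_s vₙ`; hence `|∫_s vₙ|` is uniformly small, the finitely many `n < N`
being uniformly integrable anyway. The weak limit `w` then has the same set integrals as the
strong limit `0`.
-/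

open MeasureTheory Filter Topology Set

theorem exists_ball_forall_dist_le_of_cauchySeq {E : Type*} [MetricSpace E] [CompleteSpace E]
    [Nonempty E] {Φ : ℕ → E → ℝ} (hΦ : ∀ n, Continuous (Φ n))
    (hcauchy : ∀ f, CauchySeq fun n => Φ n f) {ε : ℝ} (hε : 0 < ε) :
    ∃ N f₀, ∃ r > 0, ∀ f ∈ Metric.ball f₀ r, ∀ m ≥ N, ∀ n ≥ N, dist (Φ m f) (Φ n f) ≤ ε := by
  let F : ℕ → Set E := fun N => ⋂ (m ≥ N) (n ≥ N), {f | dist (Φ m f) (Φ n f) ≤ ε}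
  have hclosed (N : ℕ) : IsClosed (F N) :=
    isClosed_biInter fun m _ => isClosed_biInter fun n _ =>
      isClosed_le ((hΦ m).dist (hΦ n)) continuous_const
  have hcover : ⋃ N, F N = univ := by
    refine eq_univ_of_forall fun f => mem_iUnion.2 ?_
    obtain ⟨N, hN⟩ := Metric.cauchySeq_iff.1 (hcauchy f) ε hε
    exact ⟨N, mem_iInter₂.2 fun m hm => mem_iInter₂.2 fun n hn => (hN m hm n hn).le⟩
  obtain ⟨N, f₀, hf₀⟩ := nonempty_interior_of_iUnion_of_closed hclosed hcover
  obtain ⟨r, hr, hball⟩ := Metric.isOpen_iff.1 isOpen_interior f₀ hf₀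
  refine ⟨N, f₀, r, hr, fun f hf m hm n hn => ?_⟩
  have hfN : f ∈ F N := interior_subset (hball hf)
  exact mem_iInter₂.1 (mem_iInter₂.1 hfN m hm) n hn

namespace MeasureTheory

variable {X : Type*} [MeasurableSpace X] {μ : Measure X}

theorem eLpNorm_one_eq_ofReal_integral_abs {f : X → ℝ} (hf : Integrable f μ) :
    eLpNorm f 1 μ = ENNReal.ofReal (∫ x, |f x| ∂μ) := by
  rw [eLpNorm_one_eq_lintegral_enorm, ← ofReal_integral_norm_eq_lintegral_enorm hf]
  rfl

theorem abs_setIntegral_le_eLpNorm_indicator (f : X → ℝ) {s : Set X} (hs : MeasurableSet s) :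
    ENNReal.ofReal |∫ x in s, f x ∂μ| ≤ eLpNorm (s.indicator f) 1 μ := by
  rw [← Real.enorm_eq_ofReal_abs, eLpNorm_indicator_eq_eLpNorm_restrict hs,
    eLpNorm_one_eq_lintegral_enorm]
  exact enorm_integral_le_lintegral_enorm f

theorem setIntegral_abs_le_of_forall_abs_setIntegral_le {f : X → ℝ} (hf : Integrable f μ)
    {s : Set X} (hs : MeasurableSet s) {ε : ℝ}
    (h : ∀ t ⊆ s, MeasurableSet t → |∫ x in t, f x ∂μ| ≤ ε) :
    ∫ x in s, |f x| ∂μ ≤ 2 * ε := by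
  set P := {x | 0 ≤ hf.1.mk f x}
  have hP : MeasurableSet P :=
    measurableSet_le measurable_const hf.1.stronglyMeasurable_mk.measurable
  have hpos : ∫ x in s ∩ P, |f x| ∂μ = ∫ x in s ∩ P, f x ∂μ := by
    refine setIntegral_congr_ae (hs.inter hP) ?_
    filter_upwards [hf.1.ae_eq_mk] with x hx hxP
    rw [abs_of_nonneg (hx ▸ hxP.2)]
  have hneg : ∫ x in s \ P, |f x| ∂μ = -∫ x in s \ P, f x ∂μ := by
    rw [← integral_neg]
    refine setIntegral_congr_ae (hs.diff hP) ?_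
    filter_upwards [hf.1.ae_eq_mk] with x hx hxP
    rw [abs_of_neg (hx ▸ not_le.1 hxP.2)]
  have h₁ := abs_le.1 (h _ inter_subset_left (hs.inter hP))
  have h₂ := abs_le.1 (h _ sdiff_subset (hs.diff hP))
  rw [← integral_inter_add_sdiff hP hf.abs.integrableOn, hpos, hneg]
  linarith

theorem unifIntegrable_of_forall_abs_setIntegral_le {ι : Type*} {v : ι → X → ℝ}
    (hv : ∀ i, Integrable (v i) μ)
    (h : ∀ ε > 0, ∃ δ > 0, ∀ i s, MeasurableSet s → μ s ≤ ENNReal.ofReal δ →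
      |∫ x in s, v i x ∂μ| ≤ ε) :
    UnifIntegrable v 1 μ := by
  intro ε hε
  obtain ⟨δ, hδ, hvδ⟩ := h (ε / 2) (half_pos hε)
  refine ⟨δ, hδ, fun i s hs hμs => ?_⟩
  have hsmall := setIntegral_abs_le_of_forall_abs_setIntegral_le (hv i) hs
    fun t hts ht => hvδ i t ht ((measure_mono hts).trans hμs)
  rw [eLpNorm_indicator_eq_eLpNorm_restrict hs, eLpNorm_one_eq_ofReal_integral_abs (hv i).restrict]
  exact ENNReal.ofReal_le_ofReal (by linarith)

noncomputable def unitClamp (t : ℝ) : ℝ := projIcc 0 1 zero_le_one t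

theorem continuous_unitClamp : Continuous unitClamp :=
  continuous_subtype_val.comp continuous_projIcc

theorem abs_unitClamp_le (t : ℝ) : |unitClamp t| ≤ 1 := by
  unfold unitClamp
  obtain ⟨h₀, h₁⟩ := (projIcc (0 : ℝ) 1 zero_le_one t).2
  exact abs_le.2 ⟨by linarith, h₁⟩

@[simp] theorem unitClamp_zero : unitClamp 0 = 0 := by simp [unitClamp]

@[simp] theorem unitClamp_one : unitClamp 1 = 1 := by simp [unitClamp]

theorem Integrable.mul_unitClamp {f g : X → ℝ} (hf : Integrable f μ)
    (hg : AEStronglyMeasurable g μ) : Integrable (fun x => f x * unitClamp (g x)) μ :=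
  hf.mul_bdd (continuous_unitClamp.comp_aestronglyMeasurable hg)
    (ae_of_all _ fun x => abs_unitClamp_le (g x))

noncomputable def clampPairing (f : X → ℝ) (g : Lp ℝ 1 μ) : ℝ :=
  ∫ x, f x * unitClamp (g x) ∂μ

theorem continuous_clampPairing {f : X → ℝ} (hf : Integrable f μ) :
    Continuous (clampPairing (μ := μ) f) := by
  rw [continuous_iff_seqContinuous]
  intro g g₀ hg
  refine tendsto_of_subseq_tendsto fun ns hns => ?_
  obtain ⟨ms, -, hms⟩ := (tendstoInMeasure_of_tendsto_Lp (hg.comp hns)).exists_seq_tendsto_ae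
  refine ⟨ms, tendsto_integral_of_dominated_convergence (fun x => |f x|)
    (fun k => (hf.mul_unitClamp (Lp.aestronglyMeasurable _)).1) hf.abs
    (fun k => ae_of_all _ fun x => ?_) ?_⟩
  · rw [norm_mul, Real.norm_eq_abs, Real.norm_eq_abs]
    exact mul_le_of_le_one_right (abs_nonneg _) (abs_unitClamp_le _)
  · filter_upwards [hms] with x hx
    exact tendsto_const_nhds.mul ((continuous_unitClamp.tendsto _).comp hx)

theorem cauchySeq_clampPairing {v : ℕ → X → ℝ}
    (hcauchy : ∀ g : X → ℝ, Measurable g → (∀ x, |g x| ≤ 1) →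
      CauchySeq fun n => ∫ x, v n x * g x ∂μ)
    (g : Lp ℝ 1 μ) : CauchySeq fun n => clampPairing (v n) g := by
  have hg := Lp.aestronglyMeasurable g
  have hrepr (n : ℕ) : clampPairing (v n) g = ∫ x, v n x * unitClamp (hg.mk g x) ∂μ := by
    refine integral_congr_ae ?_
    filter_upwards [hg.ae_eq_mk] with x hx
    rw [hx]
  simp_rw [hrepr]
  exact hcauchy _ (continuous_unitClamp.measurable.comp hg.stronglyMeasurable_mk.measurable)
    fun x => abs_unitClamp_le _

section FiniteMeasure

variable [IsFiniteMeasure μ] {s : Set X}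

noncomputable def piecewiseConstLp (hs : MeasurableSet s) (c : ℝ) (g : Lp ℝ 1 μ) : Lp ℝ 1 μ :=
  g + (((memLp_const c).sub (Lp.memLp g)).indicator hs).toLp (s.indicator fun x => c - g x)

theorem dist_piecewiseConstLp_le (hs : MeasurableSet s) {c r : ℝ} (hc : |c| ≤ 1) (hr : 0 ≤ r)
    {g : Lp ℝ 1 μ} (hg : eLpNorm (s.indicator fun x => 1 + |g x|) 1 μ ≤ ENNReal.ofReal r) :
    dist (piecewiseConstLp hs c g) g ≤ r := by
  rw [piecewiseConstLp, dist_eq_norm, add_sub_cancel_left, Lp.norm_toLp]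
  refine ENNReal.toReal_le_of_le_ofReal hr (le_trans (eLpNorm_mono fun x => ?_) hg)
  by_cases hx : x ∈ s
  · simp only [indicator_of_mem hx, Real.norm_eq_abs]
    rw [abs_of_nonneg (by positivity : (0 : ℝ) ≤ 1 + |g x|)]
    linarith [abs_sub c (g x)]
  · simp [indicator_of_notMem hx]

theorem clampPairing_piecewiseConstLp (hs : MeasurableSet s) (f : X → ℝ) (c : ℝ)
    (g : Lp ℝ 1 μ) :
    clampPairing f (piecewiseConstLp hs c g) =
      ∫ x, f x * unitClamp (g x + s.indicator (fun x => c - g x) x) ∂μ := by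
  have hd : MemLp (s.indicator fun x => c - g x) 1 μ :=
    ((memLp_const c).sub (Lp.memLp g)).indicator hs
  refine integral_congr_ae ?_
  filter_upwards [Lp.coeFn_add g (hd.toLp _), hd.coeFn_toLp] with x hadd hind
  rw [piecewiseConstLp, hadd, Pi.add_apply, hind]

theorem clampPairing_piecewiseConstLp_one_sub_zero (hs : MeasurableSet s) {f : X → ℝ}
    (hf : Integrable f μ) (g : Lp ℝ 1 μ) :
    clampPairing f (piecewiseConstLp hs 1 g) - clampPairing f (piecewiseConstLp hs 0 g) =
      ∫ x in s, f x ∂μ := by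
  have hg := Lp.aestronglyMeasurable g
  have hint (c : ℝ) :
      Integrable (fun x => f x * unitClamp (g x + s.indicator (fun x => c - g x) x)) μ :=
    hf.mul_unitClamp (hg.add ((aestronglyMeasurable_const.sub hg).indicator hs))
  rw [clampPairing_piecewiseConstLp, clampPairing_piecewiseConstLp,
    ← integral_sub (hint 1) (hint 0), ← integral_indicator hs]
  congr 1 with x
  by_cases hx : x ∈ s <;> simp [hx]

theorem exists_forall_abs_setIntegral_le_of_cauchySeq {v : ℕ → X → ℝ}
    (hv : ∀ n, Integrable (v n) μ)
    (hcauchy : ∀ g : X → ℝ, Measurable g → (∀ x, |g x| ≤ 1) →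
      CauchySeq fun n => ∫ x, v n x * g x ∂μ)
    {ε : ℝ} (hε : 0 < ε) :
    ∃ δ > 0, ∀ n s, MeasurableSet s → μ s ≤ ENNReal.ofReal δ → |∫ x in s, v n x ∂μ| ≤ ε := by
  obtain ⟨N, g, r, hr, hball⟩ := exists_ball_forall_dist_le_of_cauchySeq
    (fun n => continuous_clampPairing (hv n)) (cauchySeq_clampPairing hcauchy)
    (by positivity : 0 < ε / 4)
  have hmaj : MemLp (fun x => 1 + |g x|) 1 μ := (memLp_const (1 : ℝ)).add (Lp.memLp g).norm
  obtain ⟨δ₀, hδ₀, hgδ⟩ := hmaj.eLpNorm_indicator_le le_rfl ENNReal.one_ne_top (half_pos hr)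
  obtain ⟨δ₁, hδ₁, hvδ⟩ := unifIntegrable_finite (f := fun i : Fin (N + 1) => v i) le_rfl
    ENNReal.one_ne_top (fun i => memLp_one_iff_integrable.2 (hv i)) (half_pos hε)
  refine ⟨min δ₀ δ₁, lt_min hδ₀ hδ₁, fun n s hs hμs => ?_⟩
  have hhead (n : ℕ) (hn : n ≤ N) : |∫ x in s, v n x ∂μ| ≤ ε / 2 := by
    have := (abs_setIntegral_le_eLpNorm_indicator (μ := μ) (v n) hs).trans
      (hvδ ⟨n, Nat.lt_succ_of_le hn⟩ s hs (hμs.trans (by gcongr; exact min_le_right _ _)))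
    exact (ENNReal.ofReal_le_ofReal_iff (by positivity)).1 this
  have htail (n : ℕ) (hn : N ≤ n) : |∫ x in s, v n x ∂μ - ∫ x in s, v N x ∂μ| ≤ ε / 2 := by
    have hsmall := hgδ s hs (hμs.trans (by gcongr; exact min_le_left _ _))
    have hmem (c : ℝ) (hc : |c| ≤ 1) : piecewiseConstLp hs c g ∈ Metric.ball g r :=
      (dist_piecewiseConstLp_le hs hc (half_pos hr).le hsmall).trans_lt (half_lt_self hr)
    have h₁ := hball _ (hmem 1 (by simp)) n hn N le_rfl
    have h₀ := hball _ (hmem 0 (by simp)) n hn N le_rfl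
    rw [Real.dist_eq] at h₁ h₀
    rw [← clampPairing_piecewiseConstLp_one_sub_zero hs (hv n),
      ← clampPairing_piecewiseConstLp_one_sub_zero hs (hv N)]
    calc _ = |(clampPairing (v n) (piecewiseConstLp hs 1 g) -
            clampPairing (v N) (piecewiseConstLp hs 1 g)) -
          (clampPairing (v n) (piecewiseConstLp hs 0 g) -
            clampPairing (v N) (piecewiseConstLp hs 0 g))| := by ring_nf
      _ ≤ ε / 4 + ε / 4 := (abs_sub _ _).trans (add_le_add h₁ h₀)
      _ = ε / 2 := by ring
  rcases le_total n N with hn | hn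
  · linarith [hhead n hn]
  · linarith [abs_sub_abs_le_abs_sub (∫ x in s, v n x ∂μ) (∫ x in s, v N x ∂μ), htail n hn,
      hhead N le_rfl]

theorem tendsto_integral_abs_of_cauchySeq_of_tendsto_ae {v : ℕ → X → ℝ}
    (hv : ∀ n, Integrable (v n) μ)
    (hcauchy : ∀ g : X → ℝ, Measurable g → (∀ x, |g x| ≤ 1) →
      CauchySeq fun n => ∫ x, v n x * g x ∂μ)
    (hae : ∀ᵐ x ∂μ, Tendsto (fun n => v n x) atTop (𝓝 0)) :
    Tendsto (fun n => ∫ x, |v n x| ∂μ) atTop (𝓝 0) := by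
  have hui : UnifIntegrable v 1 μ := unifIntegrable_of_forall_abs_setIntegral_le hv
    fun _ hε => exists_forall_abs_setIntegral_le_of_cauchySeq hv hcauchy hε
  have hL1 := tendsto_Lp_finite_of_tendsto_ae le_rfl ENNReal.one_ne_top (fun n => (hv n).1)
    MemLp.zero hui hae
  simp_rw [sub_zero, eLpNorm_one_eq_ofReal_integral_abs (hv _)] at hL1
  simpa [Function.comp_def, ENNReal.toReal_ofReal (integral_nonneg fun _ => abs_nonneg _)]
    using (ENNReal.tendsto_toReal ENNReal.zero_ne_top).comp hL1

end FiniteMeasure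

theorem ae_eq_zero_of_tendsto_setIntegral_of_tendsto_integral_abs {v : ℕ → X → ℝ} {w : X → ℝ}
    (hv : ∀ n, Integrable (v n) μ) (hw : Integrable w μ)
    (hstrong : Tendsto (fun n => ∫ x, |v n x| ∂μ) atTop (𝓝 0))
    (hweak : ∀ s, MeasurableSet s →
      Tendsto (fun n => ∫ x in s, v n x ∂μ) atTop (𝓝 (∫ x in s, w x ∂μ))) :
    w =ᵐ[μ] 0 := by
  refine hw.ae_eq_zero_of_forall_setIntegral_eq_zero fun s hs _ => ?_
  refine tendsto_nhds_unique (hweak s hs) (squeeze_zero_norm (fun n => ?_) hstrong)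
  calc ‖∫ x in s, v n x ∂μ‖ ≤ ∫ x in s, |v n x| ∂μ := norm_integral_le_integral_norm _
    _ ≤ ∫ x, |v n x| ∂μ := setIntegral_le_integral (hv n).abs (ae_of_all _ fun x => abs_nonneg _)

end MeasureTheory

theorem statement18_general (M : ℕ) (A : Set (EuclideanSpace ℝ (Fin M)))
    (hAfin : volume A < ⊤)
    (v : ℕ → EuclideanSpace ℝ (Fin M) → ℝ) (w : EuclideanSpace ℝ (Fin M) → ℝ)
    (hvint : ∀ n, IntegrableOn (v n) A)
    (hwint : IntegrableOn w A)
    (hae : ∀ᵐ x ∂(volume.restrict A),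
      Tendsto (fun n => v n x) atTop (nhds 0))
    (hweak : ∀ g : EuclideanSpace ℝ (Fin M) → ℝ, Measurable g →
      (∃ Cg : ℝ, ∀ x ∈ A, |g x| ≤ Cg) →
      Tendsto (fun n => ∫ x in A, v n x * g x) atTop
        (nhds (∫ x in A, w x * g x))) :
    (∀ᵐ x ∂(volume.restrict A), w x = 0) ∧
    Tendsto (fun n => ∫ x in A, |v n x|) atTop (nhds 0) := by
  have : IsFiniteMeasure (volume.restrict A) := ⟨by rwa [Measure.restrict_apply_univ]⟩
  have hstrong : Tendsto (fun n => ∫ x in A, |v n x|) atTop (𝓝 0) :=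
    tendsto_integral_abs_of_cauchySeq_of_tendsto_ae hvint
      (fun g hg hg₁ => (hweak g hg ⟨1, fun x _ => hg₁ x⟩).cauchySeq) hae
  refine ⟨ae_eq_zero_of_tendsto_setIntegral_of_tendsto_integral_abs hvint hwint hstrong
    fun s hs => ?_, hstrong⟩
  have hind (f : EuclideanSpace ℝ (Fin M) → ℝ) :
      ∫ x in A, f x * s.indicator 1 x = ∫ x in s, f x ∂volume.restrict A := by
    simp_rw [← indicator_mul_right, Pi.one_apply, mul_one]
    exact integral_indicator hs
  simpa only [hind] using hweak _ (measurable_one.indicator hs)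
    ⟨1, fun x _ => by by_cases hx : x ∈ s <;> simp [hx]⟩

/-- Corollary of the biting lemma: if integrable functions `vₙ` on a measurable
set `A ⊂ ℝ^M` of finite Lebesgue measure converge to `0` almost everywhere and
converge weakly in `L¹(A)` to some `w ∈ L¹(A)` (i.e. the integrals against every
bounded measurable test function converge), then `w = 0` a.e. on `A` and
`vₙ → 0` strongly in `L¹(A)`. -/
theorem statement18 (M : ℕ) (A : Set (EuclideanSpace ℝ (Fin M)))
    (hA : MeasurableSet A) (hAfin : volume A < ⊤)
    (v : ℕ → EuclideanSpace ℝ (Fin M) → ℝ) (w : EuclideanSpace ℝ (Fin M) → ℝ)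
    (hvint : ∀ n, IntegrableOn (v n) A)
    (hwint : IntegrableOn w A)
    (hae : ∀ᵐ x ∂(volume.restrict A),
      Tendsto (fun n => v n x) atTop (nhds 0))
    (hweak : ∀ g : EuclideanSpace ℝ (Fin M) → ℝ, Measurable g →
      (∃ Cg : ℝ, ∀ x ∈ A, |g x| ≤ Cg) →
      Tendsto (fun n => ∫ x in A, v n x * g x) atTop
        (nhds (∫ x in A, w x * g x))) :
    (∀ᵐ x ∂(volume.restrict A), w x = 0) ∧
    Tendsto (fun n => ∫ x in A, |v n x|) atTop (nhds 0) :=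
  statement18_general M A hAfin v w hvint hwint hae hweak
end
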